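/- arXiv:1409.3873 — 4 statements merged into one kernel-verified Lean document; each statement's English description precedes it below -/
import Mathlib

section
/- The map γ preserves edges of the Cayley graph of F₂ with respect to {a, b}: for all x, y ∈ F₂, one has x⁻¹y ∈ S if and only if γ(x)⁻¹γ(y) ∈ S, where S = {a, a⁻¹, b, b⁻¹}. In other words, γ is an automorphism of the Cayley graph of F₂. -/
/-!
The Cayley graph of `F₂` is a tree, and deleting the vertex `1` splits it into branches
according to the first letter of the reduced word: appending a letter to a reduced word or
cancelling its last letter does not change the first letter unless the word becomes empty.
Hence the endpoints of every edge lie in the closure of a single branch, on which `γ` agrees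
either with the identity or with `ι` (both fix `1`, and `ι` maps `S` to `S`). So `γ` maps edges
to edges, and since `γ` is an involution it also reflects them.
-/

/-- `F2` is the free group on two generators. -/
abbrev F2 := FreeGroup (Fin 2)

/-- The first generator `a`. -/
def a : F2 := FreeGroup.of 0

/-- The second generator `b`. -/
def b : F2 := FreeGroup.of 1

/-- The automorphism `ι` of `F2` determined by `ι a = a⁻¹` and `ι b = b⁻¹`
(given here as the induced group homomorphism, which is in fact an automorphism). -/
def iota : F2 →* F2 := FreeGroup.lift fun i => (FreeGroup.of i)⁻¹

/-- `beginsWith ℓ x` means that the reduced word of `x` is nonempty and its first letter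
is the generator `ℓ` or its inverse. -/
def beginsWith (ℓ : Fin 2) (x : F2) : Prop :=
  (FreeGroup.toWord x).head?.map Prod.fst = some ℓ

instance (ℓ : Fin 2) (x : F2) : Decidable (beginsWith ℓ x) := by
  unfold beginsWith; infer_instance

/-- The map `γ : F2 → F2`: `γ x = x` if the reduced word of `x` begins with `a` or `a⁻¹`,
and `γ x = ι x` otherwise (in particular `γ 1 = 1`). -/
def gamma (x : F2) : F2 := if beginsWith 0 x then x else iota x

namespace FreeGroup

variable {α : Type*}

def invLetter (p : α × Bool) : α × Bool := (p.1, !p.2)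

theorem inv_mk_singleton (p : α × Bool) : (mk [p])⁻¹ = mk [invLetter p] := by
  rw [inv_mk]; rfl

theorem IsReduced.map_invLetter {L : List (α × Bool)} (h : IsReduced L) :
    IsReduced (L.map invLetter) :=
  List.isChain_map_of_isChain _ (fun p q hpq hfst => by simp [invLetter, hpq hfst]) h

variable [DecidableEq α]

theorem toWord_mul_mk_singleton (x : FreeGroup α) (p : α × Bool) :
    (x * mk [p]).toWord = x.toWord ++ [p] ∨
      x.toWord = (x * mk [p]).toWord ++ [invLetter p] := by
  obtain hnil | ⟨L, q, hL⟩ := List.eq_nil_or_concat x.toWord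
  · left
    rw [hnil, toWord_eq_nil_iff.mp hnil, one_mul, toWord_mk]
    rfl
  rw [List.concat_eq_append] at hL
  by_cases hq : q = invLetter p
  · right
    have hL_red : IsReduced L := isReduced_toWord.infix (hL ▸ List.infix_append_left)
    have : x * mk [p] = mk L := by
      rw [← mk_toWord (x := x), hL, hq, ← mul_mk, ← inv_mk_singleton, inv_mul_cancel_right]
    rw [hL, this, toWord_mk, hL_red.reduce_eq, hq]
  · left
    rw [← mk_toWord (x := x), mul_mk, toWord_mk, IsReduced.reduce_eq, mk_toWord]
    refine isReduced_toWord.append IsReduced.singleton ?_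
    rw [hL]
    simp only [List.getLast?_concat, Option.mem_def, Option.some_inj, List.head?_cons]
    rintro _ rfl _ rfl hfst
    contrapose! hq
    ext
    · exact hfst
    · exact Bool.eq_not_iff.mpr hq

theorem head?_toWord_mul_mk_singleton {x : FreeGroup α} {p : α × Bool} (hx : x ≠ 1)
    (hxp : x * mk [p] ≠ 1) : (x * mk [p]).toWord.head? = x.toWord.head? := by
  rw [Ne, ← toWord_eq_nil_iff] at hx hxp
  rcases toWord_mul_mk_singleton x p with h | h
  · rw [h, List.head?_append_of_ne_nil _ hx]
  · rw [h, List.head?_append_of_ne_nil _ hxp]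

end FreeGroup

open FreeGroup (mk of toWord mk_toWord toWord_mk mul_mk IsReduced isReduced_toWord invLetter
  inv_mk_singleton head?_toWord_mul_mk_singleton)

local notation "S" => ({a, a⁻¹, b, b⁻¹} : Set F2)

theorem iota_mk_singleton (p : Fin 2 × Bool) : iota (mk [p]) = mk [invLetter p] := by
  obtain ⟨i, _ | _⟩ := p
  · change iota (mk [(i, true)])⁻¹ = mk [(i, true)]
    rw [map_inv]
    exact inv_inv (of i)
  · exact inv_mk_singleton (i, true)

theorem iota_mk (L : List (Fin 2 × Bool)) : iota (mk L) = mk (L.map invLetter) := by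
  induction L with
  | nil => exact map_one iota
  | cons p L ih =>
    rw [List.map_cons, ← List.singleton_append, ← mul_mk, map_mul, ih, iota_mk_singleton, mul_mk]
    rfl

theorem toWord_iota (x : F2) : (iota x).toWord = x.toWord.map invLetter := by
  conv_lhs => rw [← mk_toWord (x := x)]
  rw [iota_mk, toWord_mk, isReduced_toWord.map_invLetter.reduce_eq]

theorem iota_iota (x : F2) : iota (iota x) = x := by
  have : iota.comp iota = MonoidHom.id F2 := by
    ext i
    simp [iota]
  exact DFunLike.congr_fun this x

theorem beginsWith_iota (ℓ : Fin 2) (x : F2) : beginsWith ℓ (iota x) ↔ beginsWith ℓ x := by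
  simp [beginsWith, toWord_iota, invLetter, Option.map_map, Function.comp_def]

theorem gamma_gamma (x : F2) : gamma (gamma x) = x := by
  by_cases h : beginsWith 0 x
  · simp [gamma, h]
  · simp [gamma, h, beginsWith_iota, iota_iota]

theorem mem_S_iff {s : F2} : s ∈ S ↔ ∃ p, s = mk [p] := by
  constructor
  · rintro (rfl | rfl | rfl | rfl)
    exacts [⟨(0, true), rfl⟩, ⟨(0, false), inv_mk_singleton _⟩, ⟨(1, true), rfl⟩,
      ⟨(1, false), inv_mk_singleton _⟩]
  · rintro ⟨⟨i, _ | _⟩, rfl⟩ <;> fin_cases i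
    exacts [.inr (.inl (inv_mk_singleton (0, true)).symm),
      .inr (.inr (.inr (inv_mk_singleton (1, true)).symm)), .inl rfl, .inr (.inr (.inl rfl))]

theorem iota_mem_S {s : F2} (hs : s ∈ S) : iota s ∈ S := by
  obtain ⟨p, rfl⟩ := mem_S_iff.mp hs
  exact mem_S_iff.mpr ⟨invLetter p, iota_mk_singleton p⟩

theorem beginsWith_iff_of_mem_S {x y : F2} (h : x⁻¹ * y ∈ S) (hx : x ≠ 1) (hy : y ≠ 1)
    (ℓ : Fin 2) : beginsWith ℓ x ↔ beginsWith ℓ y := by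
  obtain ⟨p, hp⟩ := mem_S_iff.mp h
  obtain rfl : y = x * mk [p] := inv_mul_eq_iff_eq_mul.mp hp
  rw [beginsWith, beginsWith, head?_toWord_mul_mk_singleton hx hy]

theorem gamma_eq_id_or_iota_of_mem_S {x y : F2} (h : x⁻¹ * y ∈ S) :
    (gamma x = x ∧ gamma y = y) ∨ (gamma x = iota x ∧ gamma y = iota y) := by
  by_cases hx : x = 1
  · subst hx
    by_cases hy : beginsWith 0 y <;> simp [gamma, hy]
  by_cases hy : y = 1
  · subst hy
    by_cases hx' : beginsWith 0 x <;> simp [gamma, hx']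
  by_cases hx' : beginsWith 0 x
  · simp [gamma, hx', (beginsWith_iff_of_mem_S h hx hy 0).mp hx']
  · simp [gamma, hx', mt (beginsWith_iff_of_mem_S h hx hy 0).mpr hx']

theorem gamma_inv_mul_gamma_mem_S {x y : F2} (h : x⁻¹ * y ∈ S) : (gamma x)⁻¹ * gamma y ∈ S := by
  rcases gamma_eq_id_or_iota_of_mem_S h with ⟨hx, hy⟩ | ⟨hx, hy⟩
  · rwa [hx, hy]
  · rw [hx, hy, ← map_inv, ← map_mul]
    exact iota_mem_S h

/-- `γ` preserves edges of the Cayley graph of `F₂` with respect to `{a, b}`: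
for all `x, y`, `x⁻¹ * y ∈ S` iff `(γ x)⁻¹ * (γ y) ∈ S`, where `S = {a, a⁻¹, b, b⁻¹}`. -/
theorem gamma_cayley_automorphism :
    ∀ x y : F2, x⁻¹ * y ∈ ({a, a⁻¹, b, b⁻¹} : Set F2) ↔
      (gamma x)⁻¹ * gamma y ∈ ({a, a⁻¹, b, b⁻¹} : Set F2) := by
  intro x y
  refine ⟨gamma_inv_mul_gamma_mem_S, fun h => ?_⟩
  simpa only [gamma_gamma] using gamma_inv_mul_gamma_mem_S h
end

section
/- If x ∈ F₂ is a nontrivial element whose reduced word begins with b or b⁻¹, then γ(x·a) = γ(x)·a⁻¹, while γ(x)·γ(a) = γ(x)·a; in particular γ(x·a) ≠ γ(x)·γ(a). -/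
section Aux
variable {α : Type*} [DecidableEq α]

lemma reduce_tail_aux {x : α × Bool} {t : List (α × Bool)}
    (h : FreeGroup.reduce (x :: t) = x :: t) : FreeGroup.reduce t = t := by
  have hs : (FreeGroup.reduce t).Sublist t := FreeGroup.Red.sublist FreeGroup.reduce.red
  rw [FreeGroup.reduce.cons] at h
  rcases ht : FreeGroup.reduce t with _ | ⟨hd, tl⟩
  · rw [ht] at h
    simp at h
    simp [h]
  · rw [ht] at h hs
    dsimp only at h
    by_cases hc : x.1 = hd.1 ∧ x.2 = !hd.2
    · rw [if_pos hc] at h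
      have h1 := hs.length_le
      have h2 := congrArg List.length h
      simp at h1 h2
      omega
    · rw [if_neg hc] at h
      simp only [List.cons.injEq] at h
      exact h.2

lemma reduce_append_aux (c : α × Bool) :
    ∀ (w : List (α × Bool)), FreeGroup.reduce w = w →
      FreeGroup.reduce (w ++ [c]) = w ++ [c] ∨
      ∃ w', w = w' ++ [(c.1, !c.2)] ∧ FreeGroup.reduce (w ++ [c]) = w' := by
  intro w
  induction w with
  | nil => intro _; left; rfl
  | cons x t ih =>
    intro hred
    have htred := reduce_tail_aux hred
    rcases ih htred with h1 | ⟨w', hw', hr⟩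
    · rcases t with _ | ⟨y, t'⟩
      · by_cases hc : x.1 = c.1 ∧ x.2 = !c.2
        · right
          refine ⟨[], by simp [Prod.ext_iff, hc.1, hc.2], ?_⟩
          simp [FreeGroup.reduce.cons, hc]
        · left; simp [FreeGroup.reduce.cons, hc]
      · have hxy : ¬ (x.1 = y.1 ∧ x.2 = !y.2) := by
          intro hc
          rw [FreeGroup.reduce.cons, htred] at hred
          dsimp only at hred
          rw [if_pos hc] at hred
          have := congrArg List.length hred
          simp at this; omega
        left
        rw [List.cons_append, FreeGroup.reduce.cons, h1]
        simp [hxy]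
    · rcases w' with _ | ⟨hd, tl⟩
      · right
        refine ⟨[x], by simp [hw'], ?_⟩
        rw [List.cons_append, FreeGroup.reduce.cons, hr]
      · have hthd : t = hd :: (tl ++ [(c.1, !c.2)]) := by simp [hw']
        have hxh : ¬ (x.1 = hd.1 ∧ x.2 = !hd.2) := by
          intro hc
          rw [FreeGroup.reduce.cons, htred, hthd] at hred
          dsimp only at hred
          rw [if_pos hc] at hred
          have := congrArg List.length hred
          simp at this
        right
        refine ⟨x :: hd :: tl, by simp [hw'], ?_⟩
        rw [List.cons_append, FreeGroup.reduce.cons, hr]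
        simp [hxh]

end Aux

lemma a_ne_inv_a : (a : F2)⁻¹ ≠ a := by
  intro h
  have := congrArg FreeGroup.toWord h
  rw [FreeGroup.toWord_inv] at this
  simp [a, FreeGroup.toWord_of, FreeGroup.invRev] at this

lemma toWord_mul_a_head (x : F2) (h : beginsWith 1 x) :
    (FreeGroup.toWord (x * a)).head?.map Prod.fst = some 1 := by
  have hx : x = FreeGroup.mk x.toWord := FreeGroup.mk_toWord.symm
  have ha : a = FreeGroup.mk [((0 : Fin 2), true)] := rfl
  have hmul : x * a = FreeGroup.mk (x.toWord ++ [((0 : Fin 2), true)]) := by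
    rw [ha]; nth_rewrite 1 [hx]; rw [FreeGroup.mul_mk]
  rw [hmul, FreeGroup.toWord_mk]
  rcases reduce_append_aux ((0 : Fin 2), true) x.toWord x.reduce_toWord with h1 | ⟨w', hw', hr⟩
  · rw [h1]
    unfold beginsWith at h
    rcases hw : x.toWord with _ | ⟨y, t⟩
    · rw [hw] at h; simp at h
    · rw [hw] at h; simpa using h
  · rw [hr]
    unfold beginsWith at h
    rcases w' with _ | ⟨y, t⟩
    · simp at hw'
      rw [hw'] at h
      simp at h
    · rw [hw'] at h
      simpa using h

/-- If `x` is nontrivial and its reduced word begins with `b` or `b⁻¹`, then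
`γ (x * a) = γ x * a⁻¹`, while `γ x * γ a = γ x * a`; in particular
`γ (x * a) ≠ γ x * γ a`. -/
theorem gamma_not_hom_of_beginsWith_b (x : F2) (hx : x ≠ 1) (h : beginsWith 1 x) :
    gamma (x * a) = gamma x * a⁻¹ ∧ gamma x * gamma a = gamma x * a ∧
      gamma (x * a) ≠ gamma x * gamma a := by
  have hga : gamma a = a := by
    rw [gamma, if_pos]
    unfold beginsWith a
    rw [FreeGroup.toWord_of]
    rfl
  have hnbx : ¬ beginsWith 0 x := by
    unfold beginsWith at h ⊢
    rw [h]; decide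
  have hnbxa : ¬ beginsWith 0 (x * a) := by
    unfold beginsWith
    rw [toWord_mul_a_head x h]; decide
  have hgx : gamma x = iota x := by rw [gamma, if_neg hnbx]
  have hiota_a : iota a = a⁻¹ := by
    rw [iota, a, FreeGroup.lift_apply_of]
  have h1 : gamma (x * a) = gamma x * a⁻¹ := by
    rw [gamma, if_neg hnbxa, map_mul, hiota_a, hgx]
  refine ⟨h1, by rw [hga], ?_⟩
  rw [h1, hga]
  intro hc
  exact a_ne_inv_a (mul_left_cancel hc)
end

section
/- If x₁, x₂ ∈ F₂ satisfy γ(x₁·y) = x₂·γ(y) for all y ∈ F₂, then x₁ = 1 and x₂ = 1. In other words, no nontrivial left translation of F₂ is conjugated by γ to a left translation of F₂. -/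
/-!
Testing `y = a` and `y = a⁻¹` forces `x₁ = x₂`: otherwise both translates are flipped by `γ`,
which gives `a² = a⁻²` in the torsion-free group `F₂`. Testing `y = b` then forces `ι x₁ = x₁`
(the other alternative gives `b = b⁻¹`), and `ι` fixes only `1` because it flips the exponent of
the first letter of every nontrivial reduced word.
-/

namespace FreeGroup

variable {α : Type*}

theorem IsReduced.map_prodMap_not {L : List (α × Bool)} (h : IsReduced L) :
    IsReduced (L.map (Prod.map id not)) := by
  rw [IsReduced, List.isChain_map]
  exact h.imp fun x y hxy hfst => by simpa using hxy hfst

theorem lift_inv_of_mk (L : List (α × Bool)) :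
    lift (fun i => (of i)⁻¹) (mk L) = mk (L.map (Prod.map id not)) := by
  induction L with
  | nil => rfl
  | cons p L ih => obtain ⟨i, _ | _⟩ := p <;> simp_all [lift_mk, mul_mk, of, inv_mk, invRev]

theorem toWord_lift_inv_of [DecidableEq α] (x : FreeGroup α) :
    (lift (fun i => (of i)⁻¹) x).toWord = x.toWord.map (Prod.map id not) := by
  conv_lhs => rw [← mk_toWord (x := x)]
  rw [lift_inv_of_mk, toWord_mk, isReduced_toWord.map_prodMap_not.reduce_eq]

theorem eq_one_of_lift_inv_of_eq_self {x : FreeGroup α}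
    (h : lift (fun i => (of i)⁻¹) x = x) : x = 1 := by
  classical
  have hhead := congrArg (List.head? ∘ toWord) h
  simp only [Function.comp_apply, toWord_lift_inv_of, List.head?_map] at hhead
  rw [← toWord_eq_nil_iff]
  cases hx : x.toWord with
  | nil => rfl
  | cons p L => obtain ⟨i, _ | _⟩ := p <;> simp [hx] at hhead

end FreeGroup

lemma iota_a : iota a = a⁻¹ := by
  simp [iota, a]

lemma iota_b : iota b = b⁻¹ := by
  simp [iota, b]

lemma gamma_eq_or_eq_iota (y : F2) : gamma y = y ∨ gamma y = iota y :=
  ite_eq_or_eq _ _ _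

lemma gamma_a : gamma a = a := by
  simp [gamma, beginsWith, a]

lemma gamma_inv_a : gamma a⁻¹ = a⁻¹ := by
  simp [gamma, beginsWith, a, FreeGroup.invRev]

lemma gamma_b : gamma b = b⁻¹ := by
  simp [gamma, beginsWith, b, iota]

/-- If `γ` intertwines left translation by `x₁` with left translation by `x₂`, then
`x₁ = 1` and `x₂ = 1`: no nontrivial left translation of `F₂` is conjugated by `γ` to a
left translation. -/
theorem gamma_intertwine_trivial (x₁ x₂ : F2)
    (h : ∀ y : F2, gamma (x₁ * y) = x₂ * gamma y) : x₁ = 1 ∧ x₂ = 1 := by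
  have ha := h a
  have ha' := h a⁻¹
  rw [gamma_a] at ha
  rw [gamma_inv_a] at ha'
  obtain rfl : x₁ = x₂ := by
    rcases gamma_eq_or_eq_iota (x₁ * a) with e | e
    · exact mul_right_cancel (e ▸ ha)
    rcases gamma_eq_or_eq_iota (x₁ * a⁻¹) with e' | e'
    · exact mul_right_cancel (e' ▸ ha')
    rw [e, map_mul, iota_a] at ha
    rw [e', map_mul, map_inv, iota_a, inv_inv] at ha'
    have hsq : a * a = (a * a)⁻¹ := by
      rw [mul_inv_rev, ← mul_right_inj x₂, ← mul_assoc, ← mul_assoc,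
        ← mul_inv_eq_iff_eq_mul.mp ha, eq_mul_inv_of_mul_eq ha']
    have ha_one : a = 1 := self_eq_inv.mp (mul_eq_one_iff_eq_inv.mp (self_eq_inv.mp hsq))
    exact absurd ha_one (FreeGroup.of_ne_one _)
  have hb := h b
  rw [gamma_b] at hb
  obtain e | e := gamma_eq_or_eq_iota (x₁ * b)
  · rw [e, mul_right_inj, self_eq_inv] at hb
    exact absurd hb (FreeGroup.of_ne_one _)
  · rw [e, map_mul, iota_b, mul_left_inj] at hb
    have hx₁ : x₁ = 1 := FreeGroup.eq_one_of_lift_inv_of_eq_self hb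
    exact ⟨hx₁, hx₁⟩
end

section
/- Let λ : F₂ → Perm(F₂) be the left regular representation, λ(x)(y) = x·y, let Λ = λ(F₂) be its image (a subgroup of the permutation group of F₂), and let g ∈ Perm(F₂) be the permutation given by γ (which is a bijection since γ is an involution). Then the subgroups Λ and g⁻¹·Λ·g of Perm(F₂) intersect trivially: Λ ∩ g⁻¹Λg = {id}. -/
lemma reduce_of_reduce_cons {α} [DecidableEq α] {x : α × Bool} {L : List (α × Bool)}
    (h : FreeGroup.reduce (x :: L) = x :: L) : FreeGroup.reduce L = L := by
  rw [FreeGroup.reduce.cons] at h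
  cases hr : FreeGroup.reduce L with
  | nil =>
    rw [hr] at h
    simp only [List.cons.injEq] at h
    rw [← h.2]
  | cons hd tl =>
    rw [hr] at h
    replace h : (if x.1 = hd.1 ∧ x.2 = !hd.2 then tl else x :: hd :: tl) = x :: L := h
    by_cases hc : x.1 = hd.1 ∧ x.2 = !hd.2
    · rw [if_pos hc] at h
      have hs : (hd :: tl).Sublist L := FreeGroup.Red.sublist (hr ▸ FreeGroup.reduce.red)
      have h1 := hs.length_le
      have h2 := congrArg List.length h
      simp at h1 h2
      omega
    · rw [if_neg hc] at h
      simp only [List.cons.injEq] at h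
      exact h.2

lemma head_reduce_concat {α} [DecidableEq α] (c : α × Bool) :
    ∀ L : List (α × Bool), FreeGroup.reduce L = L → L ≠ [] → L ≠ [(c.1, !c.2)] →
      (FreeGroup.reduce (L ++ [c])).head? = L.head? := by
  intro L
  induction L with
  | nil => simp
  | cons x M ih =>
    intro hred _ hne
    have hM : FreeGroup.reduce M = M := reduce_of_reduce_cons hred
    cases M with
    | nil =>
      by_cases hc : x.1 = c.1 ∧ x.2 = !c.2
      · exfalso
        apply hne
        obtain ⟨x1, x2⟩ := x
        simp_all
      · show (if x.1 = c.1 ∧ x.2 = !c.2 then [] else [x, c]).head? = [x].head?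
        rw [if_neg hc]
        rfl
    | cons y M' =>
      by_cases hMc : (y :: M') = [(c.1, !c.2)]
      · obtain ⟨hy, hM'⟩ := List.cons_eq_cons.mp hMc
        subst hM'
        have h0 : FreeGroup.reduce (y :: [c]) = [] := by
          show (if y.1 = c.1 ∧ y.2 = !c.2 then [] else [y, c]) = []
          rw [if_pos (by rw [hy]; simp)]
        show (FreeGroup.reduce (x :: (y :: [c]))).head? = _
        rw [FreeGroup.reduce.cons, h0]
        rfl
      · have hh := ih hM (by simp) hMc
        obtain ⟨tl, htl⟩ : ∃ tl, FreeGroup.reduce ((y :: M') ++ [c]) = y :: tl := by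
          cases hrr : FreeGroup.reduce ((y :: M') ++ [c]) with
          | nil => rw [hrr] at hh; simp at hh
          | cons z tl =>
            rw [hrr] at hh
            simp only [List.head?_cons, Option.some.injEq] at hh
            exact ⟨tl, by rw [hh]⟩
        have hcond : ¬(x.1 = y.1 ∧ x.2 = !y.2) := by
          intro hcnd
          rw [FreeGroup.reduce.cons, hM] at hred
          replace hred : (if x.1 = y.1 ∧ x.2 = !y.2 then M' else x :: y :: M') = x :: y :: M' := hred
          rw [if_pos hcnd] at hred
          have := congrArg List.length hred
          simp at this
          omega
        show (FreeGroup.reduce (x :: ((y :: M') ++ [c]))).head? = _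
        rw [FreeGroup.reduce.cons, htl]
        show (if x.1 = y.1 ∧ x.2 = !y.2 then tl else x :: y :: tl).head? = _
        rw [if_neg hcond]
        rfl

lemma beginsWith_congr {x y : F2} (h : x.toWord.head? = y.toWord.head?) (ℓ : Fin 2) :
    beginsWith ℓ x ↔ beginsWith ℓ y := by
  unfold beginsWith
  rw [h]

lemma head_toWord_mul_of {α} [DecidableEq α] (x : FreeGroup α) (i : α)
    (h1 : x ≠ 1) (h2 : x ≠ (FreeGroup.of i)⁻¹) :
    (x * FreeGroup.of i).toWord.head? = x.toWord.head? := by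
  have hx : x * FreeGroup.of i = FreeGroup.mk (x.toWord ++ [(i, true)]) := by
    conv_lhs => rw [← FreeGroup.mk_toWord (x := x), ← FreeGroup.mk_toWord (x := FreeGroup.of i)]
    rw [FreeGroup.mul_mk, FreeGroup.toWord_of]
  rw [hx, FreeGroup.toWord_mk]
  exact head_reduce_concat (i, true) x.toWord (FreeGroup.reduce_toWord x)
    (by simpa [FreeGroup.toWord_eq_nil_iff] using h1)
    (fun hc => h2 (by
      apply FreeGroup.toWord_injective
      rw [hc, FreeGroup.toWord_inv, FreeGroup.toWord_of]
      rfl))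

/-- Let `Λ ≤ Perm F₂` be the image of the left regular representation and let `g` be the
permutation of `F₂` given by `γ`. Then `Λ ∩ g⁻¹ Λ g = {id}`. -/
theorem leftRegular_inter_conj_eq_bot (g : Equiv.Perm F2) (hg : ∀ x : F2, g x = gamma x) :
    (MulAction.toPermHom F2 F2).range ⊓
      Subgroup.map (MulAut.conj g⁻¹).toMonoidHom (MulAction.toPermHom F2 F2).range = ⊥ := by
  rw [eq_bot_iff]
  rintro p ⟨⟨u, hu⟩, q, ⟨v, hv⟩, hq⟩
  have E : ∀ y : F2, gamma (u * y) = v * gamma y := by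
    intro y
    have h1 : p y = u * y := by rw [← hu]; rfl
    have h2 : p y = g⁻¹ (q (g y)) := by
      rw [← hq]
      simp [MulAut.conj_apply, Equiv.Perm.mul_apply]
    have h3 : q (g y) = v * g y := by rw [← hv]; rfl
    have : g (u * y) = v * g y := by
      rw [← h1, h2, h3]
      simp
    rw [hg, hg] at this
    exact this
  have hg1 : gamma 1 = 1 := by rw [gamma, if_neg (by decide)]; exact map_one iota
  have hga : gamma a = a := by rw [gamma, if_pos (by decide)]
  have hgb : gamma b = b⁻¹ := by
    rw [gamma, if_neg (by decide)]
    show FreeGroup.lift _ (FreeGroup.of 1) = _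
    rw [FreeGroup.lift_apply_of]
    rfl
  have hv' : v = gamma u := by
    have := E 1
    rw [mul_one, hg1, mul_one] at this
    exact this.symm
  by_cases hu1 : u = 1
  · subst hu1
    simp only [Subgroup.mem_bot]
    rw [← hu, map_one]
  · exfalso
    by_cases hb : beginsWith 0 u
    · have hgu : gamma u = u := by rw [gamma, if_pos hb]
      have hne : u ≠ (FreeGroup.of 1)⁻¹ := by
        intro h; rw [h] at hb; exact absurd hb (by decide)
      have hub : (u * b).toWord.head? = u.toWord.head? :=
        head_toWord_mul_of u 1 hu1 hne
      have hbw : beginsWith 0 (u * b) := (beginsWith_congr hub 0).mpr hb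
      have hE := E b
      rw [gamma, if_pos hbw, hgb, hv', hgu] at hE
      exact absurd (mul_left_cancel hE) (by decide)
    · have hgu : gamma u = iota u := by rw [gamma, if_neg hb]
      have hne : u ≠ (FreeGroup.of 0)⁻¹ := by
        intro h; rw [h] at hb; exact hb (by decide)
      have hua : (u * a).toWord.head? = u.toWord.head? :=
        head_toWord_mul_of u 0 hu1 hne
      have hnb : ¬ beginsWith 0 (u * a) := fun h => hb ((beginsWith_congr hua 0).mp h)
      have hE := E a
      rw [gamma, if_neg hnb, map_mul, hga, hv', hgu] at hE
      have hia : iota a = a⁻¹ := by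
        show FreeGroup.lift _ (FreeGroup.of 0) = _
        rw [FreeGroup.lift_apply_of]
        rfl
      rw [hia] at hE
      exact absurd (mul_left_cancel hE) (by decide)
end
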